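/- arXiv:2010.02464 — 2 statements merged into one kernel-verified Lean document; each statement's English description precedes it below -/
import Mathlib

section
/- Let A be a nonzero positive bounded operator on a complex Hilbert space H. Then for all x, y ∈ H, |⟨x,y⟩| + (1/‖A‖)(√(⟨Ax,x⟩⟨Ay,y⟩) − |⟨Ax,y⟩|) ≤ ‖x‖‖y‖. -/
open scoped InnerProductSpace

/-! Both `A` and `B = ‖A‖ • 1 - A` are positive operators, so each satisfies the Cauchy–Schwarz
inequality `|⟪T x, y⟫|² ≤ ⟪T x, x⟫ ⟪T y, y⟫`. Splitting `‖A‖ ⟪x, y⟫ = ⟪B x, y⟫ + ⟪A x, y⟫` gives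
`‖A‖ |⟪x, y⟫| ≤ √(⟪B x, x⟫ ⟪B y, y⟫) + |⟪A x, y⟫|`, and the Cauchy–Schwarz inequality in `ℝ²`
bounds `√(⟪B x, x⟫ ⟪B y, y⟫) + √(⟪A x, x⟫ ⟪A y, y⟫)` by
`√((⟪B x, x⟫ + ⟪A x, x⟫) (⟪B y, y⟫ + ⟪A y, y⟫)) = ‖A‖ ‖x‖ ‖y‖`. -/

theorem Real.sqrt_mul_add_sqrt_mul_le {a b c d : ℝ} (ha : 0 ≤ a) (hb : 0 ≤ b) (hc : 0 ≤ c)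
    (hd : 0 ≤ d) : √(a * c) + √(b * d) ≤ √((a + b) * (c + d)) := by
  have hsum : (√(a * c) + √(b * d)) ^ 2 ≤ (a + b) * (c + d) := by
    have hgm : √(a * c) * √(b * d) = √(a * d) * √(b * c) := by
      rw [← Real.sqrt_mul (by positivity), ← Real.sqrt_mul (by positivity)]
      ring_nf
    nlinarith [sq_nonneg (√(a * d) - √(b * c)), Real.sq_sqrt (mul_nonneg ha hc),
      Real.sq_sqrt (mul_nonneg hb hd), Real.sq_sqrt (mul_nonneg ha hd),
      Real.sq_sqrt (mul_nonneg hb hc)]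
  exact Real.le_sqrt_of_sq_le hsum

namespace ContinuousLinearMap

open RCLike

variable {𝕜 E : Type*} [RCLike 𝕜] [NormedAddCommGroup E] [InnerProductSpace 𝕜 E]

abbrev IsPositive.preInnerProductSpaceCore {T : E →L[𝕜] E} (hT : T.IsPositive) :
    PreInnerProductSpace.Core 𝕜 E where
  inner u v := ⟪T u, v⟫_𝕜
  conj_inner_symm u v := by
    simp only [hT.inner_left_eq_inner_right v, inner_conj_symm, hT.inner_left_eq_inner_right u]
  re_inner_nonneg := hT.re_inner_nonneg_left
  add_left u v w := by simp only [map_add, inner_add_left]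
  smul_left u v r := by simp only [map_smul, inner_smul_left]

theorem IsPositive.norm_inner_sq_le {T : E →L[𝕜] E} (hT : T.IsPositive) (x y : E) :
    ‖⟪T x, y⟫_𝕜‖ ^ 2 ≤ re ⟪T x, x⟫_𝕜 * re ⟪T y, y⟫_𝕜 := by
  have hsymm : ‖⟪T y, x⟫_𝕜‖ = ‖⟪T x, y⟫_𝕜‖ := by
    rw [hT.inner_left_eq_inner_right, norm_inner_symm]
  have h : ‖⟪T x, y⟫_𝕜‖ * ‖⟪T y, x⟫_𝕜‖ ≤ re ⟪T x, x⟫_𝕜 * re ⟪T y, y⟫_𝕜 :=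
    @InnerProductSpace.Core.inner_mul_inner_self_le 𝕜 E _ _ _ hT.preInnerProductSpaceCore x y
  rwa [hsymm, ← sq] at h

theorem re_inner_apply_self_le (T : E →L[𝕜] E) (u : E) : re ⟪T u, u⟫_𝕜 ≤ ‖T‖ * ‖u‖ ^ 2 :=
  calc re ⟪T u, u⟫_𝕜 ≤ ‖T u‖ * ‖u‖ := re_inner_le_norm _ _
    _ ≤ ‖T‖ * ‖u‖ * ‖u‖ := by gcongr; exact T.le_opNorm u
    _ = ‖T‖ * ‖u‖ ^ 2 := by ring

theorem re_inner_norm_smul_one_sub_apply_self (T : E →L[𝕜] E) (u : E) :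
    re ⟪((‖T‖ : 𝕜) • 1 - T) u, u⟫_𝕜 = ‖T‖ * ‖u‖ ^ 2 - re ⟪T u, u⟫_𝕜 := by
  simp [inner_sub_left, inner_smul_left, inner_self_eq_norm_sq_to_K]

theorem isPositive_norm_smul_one_sub {T : E →L[𝕜] E} (hT : T.IsSymmetric) :
    ((‖T‖ : 𝕜) • 1 - T).IsPositive := by
  refine ⟨(LinearMap.IsSymmetric.one.smul (conj_ofReal _)).sub hT, fun u => ?_⟩
  change 0 ≤ re ⟪((‖T‖ : 𝕜) • 1 - T) u, u⟫_𝕜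
  rw [re_inner_norm_smul_one_sub_apply_self, sub_nonneg]
  exact T.re_inner_apply_self_le u

theorem IsPositive.norm_mul_norm_inner_add_sqrt_le {A : E →L[𝕜] E} (hA : A.IsPositive)
    (x y : E) :
    ‖A‖ * ‖⟪x, y⟫_𝕜‖ + √(re ⟪A x, x⟫_𝕜 * re ⟪A y, y⟫_𝕜) ≤
      ‖A‖ * (‖x‖ * ‖y‖) + ‖⟪A x, y⟫_𝕜‖ := by
  set B : E →L[𝕜] E := (‖A‖ : 𝕜) • 1 - A
  have hB : B.IsPositive := isPositive_norm_smul_one_sub hA.isSymmetric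
  have hsplit : ‖A‖ * ‖⟪x, y⟫_𝕜‖ ≤ ‖⟪B x, y⟫_𝕜‖ + ‖⟪A x, y⟫_𝕜‖ :=
    calc ‖A‖ * ‖⟪x, y⟫_𝕜‖ = ‖⟪B x, y⟫_𝕜 + ⟪A x, y⟫_𝕜‖ := by
          simp [B, inner_sub_left, inner_smul_left, norm_mul]
      _ ≤ ‖⟪B x, y⟫_𝕜‖ + ‖⟪A x, y⟫_𝕜‖ := norm_add_le _ _
  have hB_cs : ‖⟪B x, y⟫_𝕜‖ ≤ √(re ⟪B x, x⟫_𝕜 * re ⟪B y, y⟫_𝕜) :=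
    Real.le_sqrt_of_sq_le (hB.norm_inner_sq_le x y)
  have hsqrt : √(re ⟪B x, x⟫_𝕜 * re ⟪B y, y⟫_𝕜) + √(re ⟪A x, x⟫_𝕜 * re ⟪A y, y⟫_𝕜) ≤
      ‖A‖ * (‖x‖ * ‖y‖) := by
    have hBx : re ⟪B x, x⟫_𝕜 = ‖A‖ * ‖x‖ ^ 2 - re ⟪A x, x⟫_𝕜 :=
      re_inner_norm_smul_one_sub_apply_self A x
    have hBy : re ⟪B y, y⟫_𝕜 = ‖A‖ * ‖y‖ ^ 2 - re ⟪A y, y⟫_𝕜 :=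
      re_inner_norm_smul_one_sub_apply_self A y
    calc _ ≤ √((re ⟪B x, x⟫_𝕜 + re ⟪A x, x⟫_𝕜) * (re ⟪B y, y⟫_𝕜 + re ⟪A y, y⟫_𝕜)) :=
          Real.sqrt_mul_add_sqrt_mul_le (hB.re_inner_nonneg_left x)
            (hA.re_inner_nonneg_left x) (hB.re_inner_nonneg_left y) (hA.re_inner_nonneg_left y)
      _ = √((‖A‖ * (‖x‖ * ‖y‖)) ^ 2) := by rw [hBx, hBy]; ring_nf
      _ = ‖A‖ * (‖x‖ * ‖y‖) := Real.sqrt_sq (by positivity)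
  linarith

end ContinuousLinearMap

theorem positive_cauchy_schwarz_refinement_general {H : Type*} [NormedAddCommGroup H]
    [InnerProductSpace ℂ H] (A : H →L[ℂ] H)
    (hA : A.IsPositive) (hA0 : A ≠ 0) (x y : H) :
    ‖⟪x, y⟫_ℂ‖ +
      (1 / ‖A‖) * (Real.sqrt ((⟪A x, x⟫_ℂ).re * (⟪A y, y⟫_ℂ).re) - ‖⟪A x, y⟫_ℂ‖) ≤
      ‖x‖ * ‖y‖ := by
  have hA_pos : 0 < ‖A‖ := norm_pos_iff.mpr hA0
  have key := hA.norm_mul_norm_inner_add_sqrt_le x y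
  simp only [RCLike.re_to_complex] at key
  rw [← le_sub_iff_add_le', one_div_mul_eq_div, div_le_iff₀ hA_pos]
  linarith

theorem positive_cauchy_schwarz_refinement {H : Type*} [NormedAddCommGroup H]
    [InnerProductSpace ℂ H] [CompleteSpace H] (A : H →L[ℂ] H)
    (hA : A.IsPositive) (hA0 : A ≠ 0) (x y : H) :
    ‖⟪x, y⟫_ℂ‖ +
      (1 / ‖A‖) * (Real.sqrt ((⟪A x, x⟫_ℂ).re * (⟪A y, y⟫_ℂ).re) - ‖⟪A x, y⟫_ℂ‖) ≤
      ‖x‖ * ‖y‖ :=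
  positive_cauchy_schwarz_refinement_general A hA hA0 x y
end

section
/- Let T be a bounded operator on a complex Hilbert space H with polar decomposition T = U|T|, where U is a partial isometry with ‖U‖ ≤ 1. Then ω(T) ≤ (1/2)(‖T‖ + ‖T‖^{1/2}·ω(U|T|^{1/2})) ≤ ‖T‖. -/
/-!
Write `S = |T|^{1/2}`, so that `T = (U S) S` and `‖S‖ = ‖T‖^{1/2} =: m`. Since `0 ≤ S ≤ m`, the
self-adjoint operator `S - m/2` has norm at most `m/2`, and splitting
`T = U S (S - m/2) + (m/2) U S` bounds `ω(T)` by `‖U S‖ m/2 + (m/2) ω(U S) ≤ (‖T‖ + m ω(U S))/2`.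
The second inequality is `ω(U S) ≤ ‖U S‖ ≤ m`.
-/

open scoped InnerProductSpace
set_option synthInstance.maxHeartbeats 1000000

noncomputable def numRadius {H : Type*} [NormedAddCommGroup H]
    [InnerProductSpace ℂ H] (T : H →L[ℂ] H) : ℝ :=
  ⨆ x : {x : H // ‖x‖ = 1}, ‖⟪T x, (x : H)⟫_ℂ‖

section CStarAlgebra

variable {A : Type*} [CStarAlgebra A] [PartialOrder A] [StarOrderedRing A]

lemma CStarAlgebra.norm_sub_algebraMap_half_norm_le {a : A} (ha : 0 ≤ a) :
    ‖a - algebraMap ℝ A (‖a‖ / 2)‖ ≤ ‖a‖ / 2 := by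
  nontriviality A
  have hcfc : cfc (fun t : ℝ ↦ t - ‖a‖ / 2) a = a - algebraMap ℝ A (‖a‖ / 2) := by
    rw [cfc_sub (fun t ↦ t) (fun _ ↦ ‖a‖ / 2) a, cfc_id' ℝ a, cfc_const _ _]
  rw [← hcfc]
  refine norm_cfc_le (by positivity) fun t ht ↦ ?_
  have h0 : 0 ≤ t := spectrum_nonneg_of_nonneg ha ht
  have h1 : t ≤ ‖a‖ := (Real.le_norm_self t).trans (spectrum.norm_le_norm_of_mem ht)
  rw [Real.norm_eq_abs, abs_le]
  constructor <;> linarith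

lemma CStarAlgebra.norm_sqrt_star_mul_self (a : A) : ‖CFC.sqrt (star a * a)‖ = ‖a‖ := by
  rw [CFC.norm_sqrt _ (star_mul_self_nonneg a), CStarRing.norm_star_mul_self,
    Real.sqrt_mul_self (norm_nonneg a)]

end CStarAlgebra

section NumRadius

variable {H : Type*} [NormedAddCommGroup H] [InnerProductSpace ℂ H]

lemma norm_inner_apply_self_le (A : H →L[ℂ] H) {x : H} (hx : ‖x‖ = 1) : ‖⟪A x, x⟫_ℂ‖ ≤ ‖A‖ :=
  calc ‖⟪A x, x⟫_ℂ‖ ≤ ‖A x‖ * ‖x‖ := norm_inner_le_norm _ _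
    _ ≤ ‖A‖ * ‖x‖ * ‖x‖ := by gcongr; exact A.le_opNorm x
    _ = ‖A‖ := by rw [hx, mul_one, mul_one]

lemma norm_inner_le_numRadius (A : H →L[ℂ] H) {x : H} (hx : ‖x‖ = 1) :
    ‖⟪A x, x⟫_ℂ‖ ≤ numRadius A := by
  refine le_ciSup (f := fun x : {x : H // ‖x‖ = 1} ↦ ‖⟪A x, (x : H)⟫_ℂ‖) ⟨‖A‖, ?_⟩ ⟨x, hx⟩
  rintro _ ⟨⟨y, hy⟩, rfl⟩
  exact norm_inner_apply_self_le A hy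

lemma numRadius_le {A : H →L[ℂ] H} {c : ℝ} (hc : 0 ≤ c)
    (h : ∀ x : H, ‖x‖ = 1 → ‖⟪A x, x⟫_ℂ‖ ≤ c) : numRadius A ≤ c :=
  Real.iSup_le (fun x ↦ h x x.2) hc

lemma numRadius_nonneg (A : H →L[ℂ] H) : 0 ≤ numRadius A :=
  Real.iSup_nonneg fun _ ↦ norm_nonneg _

lemma numRadius_le_norm (A : H →L[ℂ] H) : numRadius A ≤ ‖A‖ :=
  numRadius_le (norm_nonneg A) fun _ ↦ norm_inner_apply_self_le A

lemma numRadius_add_le (A B : H →L[ℂ] H) : numRadius (A + B) ≤ numRadius A + numRadius B :=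
  numRadius_le (add_nonneg (numRadius_nonneg A) (numRadius_nonneg B)) fun x hx ↦ by
    rw [add_apply, inner_add_left]
    exact (norm_add_le _ _).trans
      (add_le_add (norm_inner_le_numRadius A hx) (norm_inner_le_numRadius B hx))

lemma numRadius_smul (c : ℂ) (A : H →L[ℂ] H) : numRadius (c • A) = ‖c‖ * numRadius A := by
  simp only [numRadius, Real.mul_iSup_of_nonneg (norm_nonneg c), smul_apply,
    inner_smul_left, norm_mul, RCLike.norm_conj]

end NumRadius

lemma numRadius_mul_le_of_nonneg {H : Type*} [NormedAddCommGroup H] [InnerProductSpace ℂ H]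
    [CompleteSpace H] (A S : H →L[ℂ] H) (hS : 0 ≤ S) :
    numRadius (A * S) ≤ ‖S‖ / 2 * (‖A‖ + numRadius A) := by
  set r : ℝ := ‖S‖ / 2
  have hsplit : A * S = A * (S - algebraMap ℝ _ r) + (r : ℂ) • A := by
    rw [mul_sub, ← Algebra.commutes, ← Algebra.smul_def, Complex.coe_smul, sub_add_cancel]
  calc numRadius (A * S)
      ≤ numRadius (A * (S - algebraMap ℝ _ r)) + numRadius ((r : ℂ) • A) :=
        hsplit ▸ numRadius_add_le _ _
    _ ≤ ‖A‖ * r + r * numRadius A := by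
        rw [numRadius_smul, Complex.norm_of_nonneg (by positivity)]
        gcongr
        exact (numRadius_le_norm _).trans <| (norm_mul_le _ _).trans <| by
          gcongr; exact CStarAlgebra.norm_sub_algebraMap_half_norm_le hS
    _ = r * (‖A‖ + numRadius A) := by ring

theorem numerical_radius_polar {H : Type*} [NormedAddCommGroup H]
    [InnerProductSpace ℂ H] [CompleteSpace H] (T U : H →L[ℂ] H)
    (hT : T = U * CFC.sqrt (ContinuousLinearMap.adjoint T * T))
    (hU : ‖U‖ ≤ 1) :
    numRadius T ≤
      (1 / 2) * (‖T‖ + Real.sqrt ‖T‖ *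
        numRadius (U * CFC.sqrt (CFC.sqrt (ContinuousLinearMap.adjoint T * T)))) ∧
    (1 / 2) * (‖T‖ + Real.sqrt ‖T‖ *
        numRadius (U * CFC.sqrt (CFC.sqrt (ContinuousLinearMap.adjoint T * T)))) ≤ ‖T‖ := by
  set S := CFC.sqrt (CFC.sqrt (ContinuousLinearMap.adjoint T * T))
  have hS : 0 ≤ S := CFC.sqrt_nonneg _
  have hnorm_S : ‖S‖ = √‖T‖ := by
    rw [CFC.norm_sqrt _ (CFC.sqrt_nonneg _), ← ContinuousLinearMap.star_eq_adjoint,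
      CStarAlgebra.norm_sqrt_star_mul_self]
  have hnorm_US : ‖U * S‖ ≤ √‖T‖ :=
    (norm_mul_le U S).trans (hnorm_S ▸ mul_le_of_le_one_left (norm_nonneg S) hU)
  have hfactor : T = U * S * S := by
    rw [mul_assoc, CFC.sqrt_mul_sqrt_self _ (CFC.sqrt_nonneg _)]
    exact hT
  have hsqrt : √‖T‖ * √‖T‖ = ‖T‖ := Real.mul_self_sqrt (norm_nonneg T)
  constructor
  · calc numRadius T = numRadius (U * S * S) := congrArg numRadius hfactor
      _ ≤ ‖S‖ / 2 * (‖U * S‖ + numRadius (U * S)) := numRadius_mul_le_of_nonneg _ _ hS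
      _ ≤ √‖T‖ / 2 * (√‖T‖ + numRadius (U * S)) := by rw [hnorm_S]; gcongr
      _ = _ := by linear_combination (1 / 2) * hsqrt
  · have hω : √‖T‖ * numRadius (U * S) ≤ √‖T‖ * √‖T‖ := mul_le_mul_of_nonneg_left
      ((numRadius_le_norm _).trans hnorm_US) (Real.sqrt_nonneg _)
    linarith
end
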